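/- arXiv:1911.09973 — 4 statements merged into one kernel-verified Lean document; each statement's English description precedes it below -/
import Mathlib

section
/- The Thue word t = τ^ω(0) does not contain 1021 as a factor. -/
/-- A word has a square if some nonempty `u` with `u ++ u` an infix. -/
def HasSquare (w : List (Fin 3)) : Prop :=
  ∃ u : List (Fin 3), u ≠ [] ∧ (u ++ u) <:+: w

def SquareFree (w : List (Fin 3)) : Prop := ¬ HasSquare w

/-- `u` occurs as a factor of the infinite word `x`. -/
def InfFactor (u : List (Fin 3)) (x : ℕ → Fin 3) : Prop :=
  ∃ m : ℕ, ∀ i < u.length, u.getD i 0 = x (m + i)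

def InfSquareFree (x : ℕ → Fin 3) : Prop :=
  ¬ ∃ u : List (Fin 3), u ≠ [] ∧ InfFactor (u ++ u) x

/-- A square-free word is irreducibly square-free if deleting any interior
letter creates a square. -/
def IrrSF (w : List (Fin 3)) : Prop :=
  SquareFree w ∧
    ∀ (w1 w2 : List (Fin 3)) (a : Fin 3),
      w = w1 ++ [a] ++ w2 → w1 ≠ [] → w2 ≠ [] → HasSquare (w1 ++ w2)

/-- The Thue morphism τ(0)=012, τ(1)=02, τ(2)=1. -/
def tau : Fin 3 → List (Fin 3) := ![[0,1,2], [0,2], [1]]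

def tauW (w : List (Fin 3)) : List (Fin 3) := w.flatMap tau

/-- The Thue word `t = τ^ω(0)`: the `n`-th letter of the fixed point of τ. -/
def thue (n : ℕ) : Fin 3 := ((tauW^[n+1]) [0]).getD n 0

/-! A factor `1021` of `τ(w)` can only be cut as `τ(2) τ(1) τ(2)…`, because `τ` is a prefix code
and no image starts with `2`; hence `212` is a factor of `w`. But `212` is never a factor of an
image `τ(w)`: its first `2` closes an image, the `1` is then `τ(2)`, and the last `2` would have to
start an image. Since `t` is the limit of the words `τ^k(0)`, each a prefix of the next, a factor
`1021` of `t` would be a factor of some `τ(τ(τ^k(0)))`. -/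

@[simp] lemma tau_zero : tau 0 = [0, 1, 2] := rfl
@[simp] lemma tau_one : tau 1 = [0, 2] := rfl
@[simp] lemma tau_two : tau 2 = [1] := rfl

@[simp] lemma tauW_nil : tauW [] = [] := rfl

@[simp] lemma tauW_cons (a : Fin 3) (w : List (Fin 3)) : tauW (a :: w) = tau a ++ tauW w := rfl

lemma tauW_append (u v : List (Fin 3)) : tauW (u ++ v) = tauW u ++ tauW v :=
  List.flatMap_append

lemma List.IsPrefix.tauW {u v : List (Fin 3)} (h : u <+: v) : tauW u <+: tauW v := by
  obtain ⟨t, rfl⟩ := h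
  exact ⟨_root_.tauW t, (tauW_append u t).symm⟩

lemma length_le_length_tauW (w : List (Fin 3)) : w.length ≤ (tauW w).length := by
  induction w with
  | nil => rfl
  | cons a w ih =>
    have : 1 ≤ (tau a).length := by fin_cases a <;> decide
    rw [tauW_cons, List.length_append, List.length_cons]
    omega

lemma tauW_ne_two_cons (w r : List (Fin 3)) : tauW w ≠ 2 :: r := by
  cases w with
  | nil => simp
  | cons a w => fin_cases a <;> simp

/-- `τ` is a prefix code, so an image `τ(w)` is parsed uniquely from the left. -/
lemma tauW_eq_tau_append {w r : List (Fin 3)} {a : Fin 3} (h : tauW w = tau a ++ r) :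
    ∃ w', w = a :: w' ∧ r = tauW w' := by
  cases w with
  | nil => fin_cases a <;> simp at h
  | cons b w => fin_cases a <;> fin_cases b <;> simp_all

lemma not_infix_212_tauW (w : List (Fin 3)) : ¬ [2, 1, 2] <:+: tauW w := by
  induction w with
  | nil => simp
  | cons a w ih =>
    have not_prefix_12 : ¬ [1, 2] <+: tauW w := by
      rintro ⟨t, ht⟩
      obtain ⟨w', -, hw'⟩ := tauW_eq_tau_append (a := 2) ht.symm
      exact tauW_ne_two_cons w' t hw'.symm
    fin_cases a <;> simp [List.infix_cons_iff, ih, not_prefix_12]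

lemma infix_212_of_infix_1021_tauW {w : List (Fin 3)} (h : [1, 0, 2, 1] <:+: tauW w) :
    [2, 1, 2] <:+: w := by
  induction w with
  | nil => simp at h
  | cons a w ih =>
    have prefix_12 (hw : [0, 2, 1] <+: tauW w) : [1, 2] <+: w := by
      obtain ⟨t, ht⟩ := hw
      obtain ⟨w', rfl, hw'⟩ := tauW_eq_tau_append (a := 1) ht.symm
      obtain ⟨w'', rfl, -⟩ := tauW_eq_tau_append (a := 2) hw'.symm
      exact ⟨w'', rfl⟩
    fin_cases a <;> simp [List.infix_cons_iff] at h ⊢ <;> tauto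

lemma iterate_tauW_prefix_succ (k : ℕ) : tauW^[k] [0] <+: tauW^[k + 1] [0] := by
  induction k with
  | zero => exact ⟨[1, 2], rfl⟩
  | succ k ih => simpa only [Function.iterate_succ_apply'] using ih.tauW

lemma iterate_tauW_prefix_of_le {k K : ℕ} (h : k ≤ K) : tauW^[k] [0] <+: tauW^[K] [0] := by
  induction K, h using Nat.le_induction with
  | base => exact List.prefix_refl _
  | succ K _ ih => exact ih.trans (iterate_tauW_prefix_succ K)

lemma lt_length_iterate_tauW (k : ℕ) : k < (tauW^[k] [0]).length := by
  induction k with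
  | zero => simp
  | succ k ih =>
    obtain ⟨r, hr⟩ : [0] <+: tauW^[k] [0] := iterate_tauW_prefix_of_le k.zero_le
    rw [← hr, List.singleton_append, List.length_cons] at ih
    rw [Function.iterate_succ_apply', ← hr, List.singleton_append, tauW_cons, tau_zero,
      List.length_append]
    have := length_le_length_tauW r
    simp only [List.length_cons, List.length_nil]
    omega

lemma thue_eq_getD_iterate {n K : ℕ} (h : n < K) : thue n = (tauW^[K] [0]).getD n 0 := by
  have hn : n < (tauW^[n + 1] [0]).length := (lt_length_iterate_tauW (n + 1)).trans' n.lt_succ_self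
  have hpre := iterate_tauW_prefix_of_le h
  rw [thue, List.getD_eq_getElem _ _ hn, List.getD_eq_getElem _ _ (hn.trans_le hpre.length_le),
    hpre.getElem hn]

lemma List.infix_of_getD_eq {α : Type*} {u L : List α} {d : α} {m : ℕ}
    (hlen : m + u.length ≤ L.length) (h : ∀ i < u.length, u.getD i d = L.getD (m + i) d) :
    u <:+: L := by
  refine List.infix_iff_getElem?.mpr ⟨m, by omega, fun i hi => ?_⟩
  have hi' := h i hi
  rw [List.getD_eq_getElem _ _ hi, List.getD_eq_getElem _ _ (by omega)] at hi'
  simp only [add_comm i m, hi', List.getElem?_eq_getElem (by omega : m + i < L.length)]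

lemma InfFactor.infix_iterate_tauW {u : List (Fin 3)} (h : InfFactor u thue) :
    ∃ N, ∀ K ≥ N, u <:+: tauW^[K] [0] := by
  obtain ⟨m, hm⟩ := h
  refine ⟨m + u.length, fun K hK => List.infix_of_getD_eq (d := 0) (m := m) ?_ fun i hi => ?_⟩
  · have := lt_length_iterate_tauW K
    omega
  · exact (hm i hi).trans (thue_eq_getD_iterate (by omega))

theorem thue_avoids_1021 : ¬ InfFactor [1, 0, 2, 1] thue := by
  intro h
  obtain ⟨N, hN⟩ := h.infix_iterate_tauW
  have h1021 := hN (N + 2) (Nat.le_add_right N 2)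
  rw [Function.iterate_succ_apply', Function.iterate_succ_apply'] at h1021
  exact not_infix_212_tauW _ (infix_212_of_infix_1021_tauW h1021)
end

section
/- The Thue word t = τ^ω(0) is not irreducibly square-free: deleting the letter 2 at the third position of t yields a square-free infinite word. -/
/-- Deleting the letter at the third position (index 2) of the Thue word. -/
def thueDel (n : ℕ) : Fin 3 := if n < 2 then thue n else thue (n + 1)

/-- The factor `x[p, p + n)` reappears `L` positions later: `Repeats x p L L` is a square and
`Repeats x p L (L + 1)` an overlap of period `L`. -/
def Repeats {α : Type*} (x : ℕ → α) (p L n : ℕ) : Prop :=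
  ∀ k, p ≤ k → k < p + n → x k = x (k + L)

section Repeats

variable {α : Type*} {x y : ℕ → α} {p s L n : ℕ}

theorem Repeats.tail (h : Repeats x p L (n + 1)) : Repeats x (p + 1) L n :=
  fun k hpk hkn => h k (by omega) (by omega)

theorem Repeats.of_shift (hxy : ∀ k, p ≤ k → x k = y (k + s)) (h : Repeats x p L n) :
    Repeats y (p + s) L n := by
  intro k hpk hkn
  obtain ⟨k, rfl⟩ : ∃ k', k = k' + s := ⟨k - s, by omega⟩
  rw [← hxy k (by omega), add_right_comm, ← hxy (k + L) (by omega)]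
  exact h k (by omega) (by omega)

end Repeats

theorem iff_of_forall_iff_succ {Q : ℕ → Prop} {a b : ℕ}
    (h : ∀ k, a ≤ k → k < b → (Q k ↔ Q (k + 1))) {i j : ℕ} (hai : a ≤ i) (hib : i ≤ b)
    (haj : a ≤ j) (hjb : j ≤ b) : Q i ↔ Q j := by
  have to_start : ∀ k, a ≤ k → k ≤ b → (Q k ↔ Q a) := by
    intro k hak
    induction k, hak using Nat.le_induction with
    | base => exact fun _ => Iff.rfl
    | succ k hak ih => exact fun hkb => (h k hak hkb).symm.trans (ih (by omega))
  exact (to_start i hai hib).trans (to_start j haj hjb).symm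

theorem infSquareFree_of_forall_not_repeats {x : ℕ → Fin 3}
    (h : ∀ m L, 0 < L → ¬ Repeats x m L L) : InfSquareFree x := by
  rintro ⟨u, hu, m, hfac⟩
  refine h m u.length (List.length_pos_iff.2 hu) fun k hmk hku => ?_
  obtain ⟨i, rfl⟩ : ∃ i, k = m + i := ⟨k - m, by omega⟩
  have h₁ := hfac i (by simp; omega)
  have h₂ := hfac (u.length + i) (by simp; omega)
  rw [List.getD_append _ _ _ _ (by omega)] at h₁
  rw [List.getD_append_right _ _ _ _ (by omega), Nat.add_sub_cancel_left] at h₂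
  rw [← h₁, add_right_comm, add_assoc, ← h₂]

def thueMorse : ℕ → Bool := Nat.binaryRec false fun b _ r => xor b r

theorem thueMorse_bit (b : Bool) (n : ℕ) : thueMorse (n.bit b) = xor b (thueMorse n) :=
  Nat.binaryRec_eq b n (Or.inl rfl)

@[simp] theorem thueMorse_two_mul (n : ℕ) : thueMorse (2 * n) = thueMorse n := by
  simpa [Nat.bit_val] using thueMorse_bit false n

@[simp] theorem thueMorse_two_mul_add_one (n : ℕ) : thueMorse (2 * n + 1) = !thueMorse n := by
  simpa [Nat.bit_val] using thueMorse_bit true n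

theorem thueMorse_two_mul_add_eq_iff {a b r : ℕ} (hr : r < 2) :
    thueMorse (2 * a + r) = thueMorse (2 * b + r) ↔ thueMorse a = thueMorse b := by
  interval_cases r <;> simp

theorem odd_of_thueMorse_eq_succ {n : ℕ} (h : thueMorse n = thueMorse (n + 1)) : Odd n := by
  rcases Nat.even_or_odd' n with ⟨k, rfl | rfl⟩
  · simp at h
  · exact odd_two_mul_add_one k

theorem thueMorse_succ_ne_of_eq {n : ℕ} (h : thueMorse n = thueMorse (n + 1)) :
    thueMorse (n + 1) ≠ thueMorse (n + 2) := fun h' =>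
  Nat.not_even_iff_odd.2 (odd_of_thueMorse_eq_succ h') (odd_of_thueMorse_eq_succ h).add_one

theorem odd_of_thueMorse_odd_shift {j c : ℕ}
    (h₀ : thueMorse (2 * j) = thueMorse (2 * j + (2 * c + 1)))
    (h₁ : thueMorse (2 * j + 1) = thueMorse (2 * j + 1 + (2 * c + 1)))
    (h₂ : thueMorse (2 * j + 2) = thueMorse (2 * j + 2 + (2 * c + 1))) :
    Odd j ∧ Odd (j + c) := by
  rw [show 2 * j + (2 * c + 1) = 2 * (j + c) + 1 by ring] at h₀
  rw [show 2 * j + 1 + (2 * c + 1) = 2 * (j + c + 1) by ring] at h₁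
  rw [show 2 * j + 2 = 2 * (j + 1) by ring,
    show 2 * (j + 1) + (2 * c + 1) = 2 * (j + c + 1) + 1 by ring] at h₂
  simp only [thueMorse_two_mul, thueMorse_two_mul_add_one] at h₀ h₁ h₂
  refine ⟨odd_of_thueMorse_eq_succ ?_, odd_of_thueMorse_eq_succ ?_⟩
  · rw [h₂, ← h₁, Bool.not_not]
  · rw [← h₁, h₀, Bool.not_not]

/-- For an even period the even positions carry an overlap of half the period; for an odd one,
`odd_of_thueMorse_odd_shift` makes two consecutive integers odd. -/
theorem not_repeats_thueMorse {L : ℕ} (hL : 0 < L) (p : ℕ) :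
    ¬ Repeats thueMorse p L (L + 1) := by
  induction L using Nat.strong_induction_on generalizing p with
  | _ L ih =>
  intro h
  obtain ⟨K, rfl | rfl⟩ := Nat.even_or_odd' L
  · obtain ⟨q, r, hr, rfl⟩ : ∃ q r, r < 2 ∧ p = 2 * q + r :=
      ⟨p / 2, p % 2, Nat.mod_lt _ two_pos, (Nat.div_add_mod p 2).symm⟩
    refine ih K (by omega) (by omega) q fun k hqk hkK => ?_
    have := h (2 * k + r) (by omega) (by omega)
    rwa [show 2 * k + r + 2 * K = 2 * (k + K) + r by ring, thueMorse_two_mul_add_eq_iff hr] at this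
  · rcases Nat.eq_zero_or_pos K with rfl | hK
    · exact thueMorse_succ_ne_of_eq (h p le_rfl (by omega)) (h (p + 1) (by omega) (by omega))
    have odd_of_le : ∀ j, p ≤ 2 * j → 2 * j + 2 ≤ p + (2 * K + 1) → Odd j ∧ Odd (j + K) :=
      fun j hpj hjL => odd_of_thueMorse_odd_shift (h _ hpj (by omega))
        (h _ (by omega) (by omega)) (h _ (by omega) (by omega))
    obtain ⟨j, hpj, hjp⟩ : ∃ j, p ≤ 2 * j ∧ 2 * j ≤ p + 1 := ⟨(p + 1) / 2, by omega, by omega⟩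
    obtain ⟨hj, hjK⟩ := odd_of_le j hpj (by omega)
    have hK2 : 2 ≤ K := by
      rw [Nat.odd_iff] at hj hjK
      omega
    exact Nat.not_even_iff_odd.2 (odd_of_le (j + 1) (by omega) (by omega)).1 hj.add_one

def jump (a b : Bool) : Fin 3 := if a = b then 1 else if b then 0 else 2

theorem jump_eq_one_iff {a b : Bool} : jump a b = 1 ↔ a = b := by
  revert a b; decide

theorem eq_of_jump_eq_of_ne {a b c d : Bool} (h : jump a b = jump c d) (hab : a ≠ b) : a = c := by
  revert a b c d; decide

theorem jump_eq_jump_iff {a b c d : Bool} (h : jump a b = jump c d) : a = c ↔ b = d := by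
  revert a b c d; decide

theorem eq_and_eq_of_jump_eq_jump {a b c : Bool} (h : jump a b = jump b c) : a = b ∧ b = c := by
  revert a b c; decide

theorem jump_eq_two_of_jump_eq_zero_of_jump_eq_one {a b c d : Bool} (h₀ : jump a b = 0)
    (h₁ : jump b c = 1) (hcd : c ≠ d) : jump c d = 2 := by
  revert a b c d; decide

def tmJump (n : ℕ) : Fin 3 := jump (thueMorse n) (thueMorse (n + 1))

theorem tmJump_ne_succ (n : ℕ) : tmJump n ≠ tmJump (n + 1) := fun h =>
  have ⟨h₁, h₂⟩ := eq_and_eq_of_jump_eq_jump h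
  thueMorse_succ_ne_of_eq h₁ h₂

theorem tmJump_add_two_eq_two {n : ℕ} (h₀ : tmJump n = 0) (h₁ : tmJump (n + 1) = 1) :
    tmJump (n + 2) = 2 :=
  jump_eq_two_of_jump_eq_zero_of_jump_eq_one h₀ h₁ (thueMorse_succ_ne_of_eq (jump_eq_one_iff.1 h₁))

theorem repeats_thueMorse_of_repeats_tmJump {a L n : ℕ} (hn : 2 ≤ n) (h : Repeats tmJump a L n) :
    Repeats thueMorse a L (n + 1) := by
  have step : ∀ k, a ≤ k → k < a + n →
      (thueMorse k = thueMorse (k + L) ↔ thueMorse (k + 1) = thueMorse (k + 1 + L)) :=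
    fun k hak hkn => add_right_comm k L 1 ▸ jump_eq_jump_iff (h k hak hkn)
  obtain ⟨i, hai, hia, hne⟩ : ∃ i, a ≤ i ∧ i < a + 2 ∧ thueMorse i ≠ thueMorse (i + 1) := by
    by_cases h₀ : thueMorse a = thueMorse (a + 1)
    · exact ⟨a + 1, by omega, by omega, thueMorse_succ_ne_of_eq h₀⟩
    · exact ⟨a, le_rfl, by omega, h₀⟩
  have agree := eq_of_jump_eq_of_ne (h i hai (by omega)) hne
  exact fun k hak hkn => (iff_of_forall_iff_succ step hai (by omega) hak (by omega)).1 agree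

theorem not_repeats_tmJump {L : ℕ} (hL : 0 < L) (p : ℕ) : ¬ Repeats tmJump p L L := by
  intro h
  rcases Nat.lt_or_ge L 2 with hL1 | hL2
  · obtain rfl : L = 1 := by omega
    exact tmJump_ne_succ p (h p le_rfl (by omega))
  · exact not_repeats_thueMorse hL p (repeats_thueMorse_of_repeats_tmJump hL2 h)

def tmJumpPrefix (n : ℕ) : List (Fin 3) := (List.range n).map tmJump

theorem tmJumpPrefix_succ (n : ℕ) : tmJumpPrefix (n + 1) = tmJumpPrefix n ++ [tmJump n] := by
  simp [tmJumpPrefix, List.range_succ]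

theorem tmJumpPrefix_append_tau (n : ℕ) :
    tmJumpPrefix (2 * n + (thueMorse n).toNat) ++ tau (tmJump n) =
      tmJumpPrefix (2 * (n + 1) + (thueMorse (n + 1)).toNat) := by
  have h₀ : tmJump (2 * n) = jump (thueMorse n) (!thueMorse n) := by simp [tmJump]
  have h₁ : tmJump (2 * n + 1) = jump (!thueMorse n) (thueMorse (n + 1)) := by
    simp [tmJump, show 2 * n + 1 + 1 = 2 * (n + 1) by ring]
  have h₂ : tmJump (2 * n + 2) = jump (thueMorse (n + 1)) (!thueMorse (n + 1)) := by
    simp [tmJump, show 2 * n + 2 = 2 * (n + 1) by ring]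
  rw [tmJump, show 2 * (n + 1) = 2 * n + 2 by ring]
  generalize thueMorse n = a at *
  generalize thueMorse (n + 1) = b at *
  cases a <;> cases b <;> simp [tmJumpPrefix_succ, h₀, h₁, h₂, jump, tau]

/-- `τ` maps `t[0, n)` to a word of length `2n + #0 - #2`, and the number of rises minus the
number of falls of `tm` on `[0, n]` telescopes to `tm n`. -/
theorem tauW_tmJumpPrefix (n : ℕ) :
    tauW (tmJumpPrefix n) = tmJumpPrefix (2 * n + (thueMorse n).toNat) := by
  induction n with
  | zero => rfl
  | succ n ih =>
    rw [tmJumpPrefix_succ, tauW, List.flatMap_append, ← tauW, ih, List.flatMap_singleton,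
      tmJumpPrefix_append_tau]

theorem exists_iterate_tauW_eq_tmJumpPrefix (k : ℕ) :
    ∃ ℓ, k < ℓ ∧ tauW^[k] [0] = tmJumpPrefix ℓ := by
  induction k with
  | zero => exact ⟨1, one_pos, by decide⟩
  | succ k ih =>
    obtain ⟨ℓ, hkℓ, h⟩ := ih
    refine ⟨2 * ℓ + (thueMorse ℓ).toNat, by omega, ?_⟩
    rw [Function.iterate_succ_apply', h, tauW_tmJumpPrefix]

theorem thue_eq_tmJump (n : ℕ) : thue n = tmJump n := by
  obtain ⟨ℓ, hnℓ, h⟩ := exists_iterate_tauW_eq_tmJumpPrefix (n + 1)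
  simp [thue, h, tmJumpPrefix, show n < ℓ by omega]

theorem thueDel_eq (n : ℕ) : thueDel n = if n < 2 then tmJump n else tmJump (n + 1) := by
  simp only [thueDel, thue_eq_tmJump]

theorem thueDel_of_two_le {n : ℕ} (hn : 2 ≤ n) : thueDel n = tmJump (n + 1) := by
  rw [thueDel_eq, if_neg (by omega)]

theorem not_repeats_thueDel_zero {L : ℕ} (hL : 3 ≤ L) : ¬ Repeats thueDel 0 L L := by
  intro h
  have prefix_eq : thueDel 0 = 0 ∧ thueDel 1 = 1 ∧ thueDel 2 = 0 := by
    simp only [thueDel_eq]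
    decide
  have h₀ : tmJump (L + 1) = 0 := by
    rw [← thueDel_of_two_le (by omega), ← zero_add L, ← h 0 le_rfl (by omega), prefix_eq.1]
  have h₁ : tmJump (L + 1 + 1) = 1 := by
    rw [← thueDel_of_two_le (by omega), add_comm L, ← h 1 (by omega) (by omega), prefix_eq.2.1]
  have h₂ : tmJump (L + 2 + 1) = 0 := by
    rw [← thueDel_of_two_le (by omega), add_comm L, ← h 2 (by omega) (by omega), prefix_eq.2.2]
  exact absurd (h₂.symm.trans (tmJump_add_two_eq_two h₀ h₁)) (by decide)

theorem not_repeats_thueDel_one {L : ℕ} (hL : 4 ≤ L) : ¬ Repeats thueDel 1 L L := by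
  intro h
  have h₀ : tmJump (L + 2) = 1 := by
    rw [← thueDel_of_two_le (by omega), add_comm L, ← h 1 le_rfl (by omega), thueDel_eq,
      if_pos (by omega)]
    decide
  obtain ⟨n, rfl⟩ : ∃ n, L = n + 1 := ⟨L - 1, by omega⟩
  have hrep : Repeats thueMorse 3 (n + 1) (n + 1) :=
    repeats_thueMorse_of_repeats_tmJump (by omega)
      (h.tail.of_shift fun k hk => thueDel_of_two_le hk)
  have hodd₁ : Odd (n + 3) := odd_of_thueMorse_eq_succ (jump_eq_one_iff.1 h₀)
  have hodd₂ : Odd (n + 6) := by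
    apply odd_of_thueMorse_eq_succ
    rw [show n + 6 = 5 + (n + 1) by ring, ← hrep 5 (by omega) (by omega),
      show 5 + (n + 1) + 1 = 6 + (n + 1) by ring, ← hrep 6 (by omega) (by omega)]
    decide
  rw [Nat.odd_iff] at hodd₁ hodd₂
  omega

theorem not_repeats_thueDel {L : ℕ} (hL : 0 < L) (m : ℕ) : ¬ Repeats thueDel m L L := by
  rcases Nat.lt_or_ge m 2 with hm | hm
  · have small : ∀ m < 2, ∀ L < 4, 0 < L → ¬ Repeats thueDel m L L := by
      simp only [Repeats, thueDel_eq]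
      decide
    rcases Nat.lt_or_ge L 4 with hL4 | hL4
    · exact small m hm L hL4 hL
    interval_cases m
    · exact not_repeats_thueDel_zero (by omega)
    · exact not_repeats_thueDel_one hL4
  · exact fun h =>
      not_repeats_tmJump hL (m + 1) (h.of_shift fun k hk => thueDel_of_two_le (by omega))

theorem thue_not_irreducibly_squareFree :
    thue 2 = 2 ∧ InfSquareFree thueDel :=
  ⟨by rw [thue_eq_tmJump]; decide,
    infSquareFree_of_forall_not_repeats fun m _ hL => not_repeats_thueDel hL m⟩
end

section
/- The word φ(0) = 01202120102120210 is irreducibly square-free. -/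
/-- The uniform morphism φ of length 17. -/
def phi : Fin 3 → List (Fin 3) := ![[0,1,2,0,2,1,2,0,1,0,2,1,2,0,2,1,0], [1,2,0,1,0,2,0,1,2,1,0,2,0,1,0,2,1], [2,0,1,2,1,0,1,2,0,2,1,0,1,2,1,0,2]]

def phiW (w : List (Fin 3)) : List (Fin 3) := w.flatMap phi

/-! Both halves of the statement are finite checks on a word of length 17: `φ(0)` has no
square, and each of its 15 interior deletions has one. A square is a pair of equal adjacent
windows, so `HasSquare` is a bounded search, and an interior deletion is determined by its
position, so the whole statement is decided by evaluation. -/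

lemma hasSquare_iff_exists_take_drop (w : List (Fin 3)) :
    HasSquare w ↔ ∃ s ≤ w.length, ∃ k ≤ w.length, k ≠ 0 ∧ s + 2 * k ≤ w.length ∧
      (w.drop s).take k = (w.drop (s + k)).take k := by
  constructor
  · rintro ⟨u, hu, p, q, rfl⟩
    have hlen : (p ++ (u ++ u) ++ q).length = p.length + 2 * u.length + q.length := by
      simp only [List.length_append]; omega
    have hdrop₁ : (p ++ (u ++ u) ++ q).drop p.length = u ++ (u ++ q) := by
      simp only [List.append_assoc, List.drop_left]
    have hdrop₂ : (p ++ (u ++ u) ++ q).drop (p.length + u.length) = u ++ q := by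
      rw [List.append_assoc, List.append_assoc, ← List.append_assoc p u,
        List.drop_left' List.length_append]
    refine ⟨p.length, by omega, u.length, by omega, by simpa using hu, by omega, ?_⟩
    rw [hdrop₁, hdrop₂, List.take_left, List.take_left]
  · rintro ⟨s, -, k, -, hk, hlen, hwindow⟩
    refine ⟨(w.drop s).take k, ?_, w.take s, w.drop (s + 2 * k), ?_⟩
    · rw [← List.length_pos_iff, List.length_take, List.length_drop]
      omega
    · have hsquare : (w.drop s).take k ++ (w.drop s).take k = (w.drop s).take (k + k) := by
        nth_rewrite 2 [hwindow]
        rw [List.take_add, List.drop_drop]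
      have hdrop : w.drop (s + 2 * k) = (w.drop s).drop (k + k) := by
        rw [List.drop_drop, two_mul]
      rw [hsquare, hdrop, List.append_assoc, List.take_append_drop, List.take_append_drop]

instance : DecidablePred HasSquare :=
  fun w => decidable_of_iff _ (hasSquare_iff_exists_take_drop w).symm

instance : DecidablePred SquareFree := fun w => inferInstanceAs (Decidable (¬ HasSquare w))

lemma irrSF_iff_eraseIdx (w : List (Fin 3)) :
    IrrSF w ↔ SquareFree w ∧ ∀ m < w.length - 1, 0 < m → HasSquare (w.eraseIdx m) := by
  refine and_congr_right fun _ => ⟨fun h m hm hm0 => ?_, fun h w1 w2 a hw hw1 hw2 => ?_⟩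
  · have hsplit : w = w.take m ++ [w[m]] ++ w.drop (m + 1) := by
      rw [List.append_assoc, List.singleton_append, List.getElem_cons_drop, List.take_append_drop]
    rw [List.eraseIdx_eq_take_drop_succ]
    refine h _ _ _ hsplit ?_ ?_
    · rw [← List.length_pos_iff, List.length_take]; omega
    · rw [← List.length_pos_iff, List.length_drop]; omega
  · subst hw
    have herase : (w1 ++ [a] ++ w2).eraseIdx w1.length = w1 ++ w2 := by
      rw [List.append_assoc, List.eraseIdx_append_of_length_le le_rfl, Nat.sub_self]
      rfl
    rw [← herase]
    refine h _ ?_ (List.length_pos_iff.mpr hw1)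
    simp only [List.length_append, List.length_singleton]
    have hw2len := List.length_pos_iff.mpr hw2
    omega

theorem phi0_irreducibly_squareFree : IrrSF (phi 0) := by
  rw [irrSF_iff_eraseIdx]
  decide
end

section
/- The morphism φ with φ(0)=01202120102120210, φ(1)=12010201210201021, φ(2)=20121012021012102 has the alignment property: for all letters a, b, c, if φ(bc) = u·φ(a)·v, then u or v is empty, and correspondingly a = b or a = c. -/
/-! Since `phi` is uniform of length 17, an occurrence of `phi a` inside `phi b ++ phi c` starts
at one of the 18 offsets `0, …, 17`; checking all 27 · 18 windows shows that only the offsets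
`0` and `17` match, and only with `a = b` resp. `a = c`. -/

lemma List.take_drop_length_of_eq_append {α : Type*} {w u x v : List α} (h : w = u ++ x ++ v) :
    (w.drop u.length).take x.length = x := by
  rw [h, List.append_assoc, List.drop_left, List.take_left]

lemma phi_length (a : Fin 3) : (phi a).length = 17 := by
  fin_cases a <;> rfl

lemma aligned_of_phi_window_eq (a b c : Fin 3) {k : ℕ} (hk : k ≤ 17)
    (h : ((phi b ++ phi c).drop k).take 17 = phi a) :
    (k = 0 ∧ a = b) ∨ (k = 17 ∧ a = c) := by
  revert a b c k
  decide

theorem phi_alignment (a b c : Fin 3) (u v : List (Fin 3))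
    (h : phi b ++ phi c = u ++ phi a ++ v) :
    (u = [] ∧ a = b) ∨ (v = [] ∧ a = c) := by
  have hlen : 34 = u.length + 17 + v.length := by
    simpa only [List.length_append, phi_length] using congrArg List.length h
  have hwindow := List.take_drop_length_of_eq_append h
  rw [phi_length] at hwindow
  rcases aligned_of_phi_window_eq a b c (by omega) hwindow with ⟨hu, hab⟩ | ⟨hu, hac⟩
  · exact Or.inl ⟨List.eq_nil_of_length_eq_zero hu, hab⟩
  · exact Or.inr ⟨List.eq_nil_of_length_eq_zero (by omega), hac⟩
end
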